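/- arXiv:2110.12453 — 3 statements merged into one kernel-verified Lean document; each statement's English description precedes it below -/
import Mathlib

section
/- The map C*_{z²} on L²(𝕋) defined by C*_{z²}(f)(z) = z·conj(f^e(\bar{z})) + \bar{z}·conj(f^o(\bar{z})) is a conjugation that commutes with M_{z²} but does not commute with M_z. -/
open MeasureTheory Complex
open scoped Real

noncomputable section

instance : Fact (0 < 2 * Real.pi) := ⟨by positivity⟩

/-- The circle group, modeled as `ℝ / 2πℤ`. -/
abbrev UnitCircle := AddCircle (2 * Real.pi)

/-- Normalized Lebesgue (Haar) measure on the circle. -/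
abbrev hm : Measure UnitCircle := AddCircle.haarAddCircle

/-- `L²(𝕋)`. -/
abbrev L2T := Lp ℂ 2 hm

/-- The coordinate function `z` on the circle. -/
def zz : UnitCircle → ℂ := fun x => fourier 1 x

/-- The Hardy space `H²` inside `L²(𝕋)`: the closed span of `{z^n : n ≥ 0}`. -/
def Hardy : Submodule ℂ L2T :=
  (Submodule.span ℂ (Set.range fun n : ℕ => fourierLp 2 (n : ℤ))).topologicalClosure

/-- even part `f^e(z) = (f(z)+f(-z))/2` (`-z` corresponds to `x + π`). -/
def evenPart (g : UnitCircle → ℂ) : UnitCircle → ℂ :=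
  fun x => (g x + g (x + ((Real.pi : ℝ) : UnitCircle))) / 2

/-- odd part `f^o(z) = (f(z)-f(-z))/2`. -/
def oddPart (g : UnitCircle → ℂ) : UnitCircle → ℂ :=
  fun x => (g x - g (x + ((Real.pi : ℝ) : UnitCircle))) / 2

/-- A conjugation on `L²(𝕋)`: an antilinear involutive map with `⟪Cf, Cg⟫ = ⟪g, f⟫`. -/
structure IsConjugation (C : L2T → L2T) : Prop where
  map_add : ∀ f g, C (f + g) = C f + C g
  map_smul : ∀ (c : ℂ) (f), C (c • f) = (starRingEnd ℂ) c • C f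
  involutive : ∀ f, C (C f) = f
  inner_eq : ∀ f g, (inner ℂ (C f) (C g) : ℂ) = inner ℂ g f

/-- the subspace `θ^k · S` of `L²(𝕋)` (given as the span of the set of elements
a.e. equal to `θ^k f` with `f ∈ S`; this set is already a subspace). -/
def mulSub (θ : UnitCircle → ℂ) (k : ℤ) (S : Submodule ℂ L2T) : Submodule ℂ L2T :=
  Submodule.span ℂ {g : L2T | ∃ f ∈ S,
    (g : UnitCircle → ℂ) =ᵐ[hm] fun x => θ x ^ k * (f : UnitCircle → ℂ) x}

/-- `θ` is inner: `θ ∈ L²` with `|θ| = 1` a.e. and `θ ∈ H²`. -/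
def IsInner (θ : UnitCircle → ℂ) : Prop :=
  ∃ hθ : MemLp θ 2 hm, (∀ᵐ x ∂hm, ‖θ x‖ = 1) ∧ hθ.toLp θ ∈ Hardy

/-- The model space `K_θ = H² ⊖ θH²`. -/
def modelSpace (θ : UnitCircle → ℂ) : Submodule ℂ L2T :=
  Hardy ⊓ (mulSub θ 1 Hardy)ᗮ

/-- The operator `M_{[φ₁,φ₂]}` applied to a function: `φ₁ g^e + φ₂ g^o`. -/
def mul2 (φ1 φ2 g : UnitCircle → ℂ) : UnitCircle → ℂ :=
  fun x => φ1 x * evenPart g x + φ2 x * oddPart g x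

/-- `J* f (z) = conj (f (z̄))`; `z̄` corresponds to `-x`. -/
def jstar (f : UnitCircle → ℂ) : UnitCircle → ℂ :=
  fun y => (starRingEnd ℂ) (f (-y))

/-- Finite Blaschke product with zeros `lam 0, …, lam (n-1)`. -/
def blaschke (n : ℕ) (lam : Fin n → ℂ) : UnitCircle → ℂ :=
  fun x => ∏ k, (lam k - zz x) / (1 - (starRingEnd ℂ) (lam k) * zz x)

/-- The standard basis functions `e_j` of the model space `K_B`. -/
def blaschkeBasis (n : ℕ) (lam : Fin n → ℂ) (j : Fin n) : UnitCircle → ℂ :=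
  fun x => (∏ k ∈ Finset.univ.filter (fun k : Fin n => (k : ℕ) < (j : ℕ)),
      (lam k - zz x) / (1 - (starRingEnd ℂ) (lam k) * zz x)) *
    ((Real.sqrt (1 - ‖lam j‖ ^ 2) : ℂ) / (1 - (starRingEnd ℂ) (lam j) * zz x))

/-- `C*_{z²} f (x) = z·conj(f^e(z̄)) + z̄·conj(f^o(z̄))` (`z̄` corresponds to `-x`). -/
def cstar2 (f : UnitCircle → ℂ) : UnitCircle → ℂ :=
  fun x => zz x * (starRingEnd ℂ) (evenPart f (-x))
    + (starRingEnd ℂ) (zz x) * (starRingEnd ℂ) (oddPart f (-x))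

/-!
On `ℝ/2πℤ`, `z ↦ -z` is translation by `π` and `z ↦ z̄` is negation. Additivity,
antilinearity, involutivity and commutation with `z²` are then pointwise identities using only
`|z| = 1`, `f^e(-z) = f^e(z)` and `f^o(-z) = -f^o(z)`. For `⟪Cf, Cg⟫ = ⟪g, f⟫`, summing the
integrand `conj (Cf) · Cg` over the points `x` and `x + π` cancels the cross terms between even
and odd parts and leaves the same sum for `conj g · f` over `-x` and `-x + π`; both maps
preserve Haar measure. Finally `C (z · 1) = 1` while `z · C 1 = z²`, and `1 ⊥ z²`.
-/

section

variable {G E : Type*} [MeasurableSpace G] [AddGroup G] [MeasurableAdd G] [MeasurableNeg G]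
  {μ : Measure G} [μ.IsAddRightInvariant] [μ.IsNegInvariant]
  [NormedAddCommGroup E] [NormedSpace ℝ E]

theorem integral_eq_of_add_comp_add_right_eq {F H : G → E} (a : G) (hF : Integrable F μ)
    (hH : Integrable H μ) (h : ∀ x, F x + F (x + a) = H (-x) + H (-x + a)) :
    ∫ x, F x ∂μ = ∫ x, H x ∂μ := by
  have hH' : Integrable (fun x => H (x + a)) μ := hH.comp_add_right a
  have hF2 : ∫ x, F x + F (x + a) ∂μ = (2 : ℝ) • ∫ x, F x ∂μ := by
    rw [integral_add hF (hF.comp_add_right a), integral_add_right_eq_self, two_smul]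
  have hH2 : ∫ x, H (-x) + H (-x + a) ∂μ = (2 : ℝ) • ∫ x, H x ∂μ := by
    rw [integral_add hH.comp_neg hH'.comp_neg, integral_neg_eq_self,
      integral_neg_eq_self (fun x => H (x + a)), integral_add_right_eq_self, two_smul]
  exact smul_right_injective E two_ne_zero
    (hF2.symm.trans ((integral_congr_ae (.of_forall h)).trans hH2))

end

local notation "P" => ((Real.pi : ℝ) : UnitCircle)

lemma halfTurn_add_halfTurn : P + P = (0 : UnitCircle) := by
  rw [← AddCircle.coe_period (p := 2 * Real.pi), ← AddCircle.coe_add]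
  norm_num [two_mul]

lemma neg_halfTurn : -P = P := by
  rw [neg_eq_iff_add_eq_zero, halfTurn_add_halfTurn]

lemma add_halfTurn_add_halfTurn (x : UnitCircle) : x + P + P = x := by
  rw [add_assoc, halfTurn_add_halfTurn, add_zero]

lemma zz_neg (x : UnitCircle) : zz (-x) = (starRingEnd ℂ) (zz x) := by
  rw [zz, zz, fourier_apply, smul_neg, fourier_neg']

lemma zz_add_halfTurn (x : UnitCircle) : zz (x + P) = -zz x := by
  have h := fourier_add_half_inv_index (T := 2 * Real.pi) (n := 1) one_ne_zero
    (by positivity) x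
  rwa [show 2 * Real.pi / 2 / ((1 : ℤ) : ℝ) = Real.pi by push_cast; ring] at h

lemma zz_mul_conj (x : UnitCircle) : zz x * (starRingEnd ℂ) (zz x) = 1 := by
  rw [Complex.mul_conj, Complex.normSq_eq_norm_sq, zz, fourier_apply, Circle.norm_coe]
  norm_num

lemma evenPart_add_halfTurn (u : UnitCircle → ℂ) (x : UnitCircle) :
    evenPart u (x + P) = evenPart u x := by
  simp only [evenPart, add_halfTurn_add_halfTurn]; ring

lemma oddPart_add_halfTurn (u : UnitCircle → ℂ) (x : UnitCircle) :
    oddPart u (x + P) = -oddPart u x := by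
  simp only [oddPart, add_halfTurn_add_halfTurn]; ring

lemma evenPart_add_oddPart (u : UnitCircle → ℂ) (x : UnitCircle) :
    evenPart u x + oddPart u x = u x := by
  simp only [evenPart, oddPart]; ring

lemma evenPart_sub_oddPart (u : UnitCircle → ℂ) (x : UnitCircle) :
    evenPart u x - oddPart u x = u (x + P) := by
  simp only [evenPart, oddPart]; ring

lemma cstar2_add (u v : UnitCircle → ℂ) : cstar2 (u + v) = cstar2 u + cstar2 v := by
  ext x
  simp only [cstar2, evenPart, oddPart, Pi.add_apply, map_add, map_sub, map_div₀, map_ofNat]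
  ring

lemma cstar2_smul (c : ℂ) (u : UnitCircle → ℂ) :
    cstar2 (c • u) = (starRingEnd ℂ) c • cstar2 u := by
  ext x
  simp only [cstar2, evenPart, oddPart, Pi.smul_apply, smul_eq_mul, map_add, map_sub, map_mul,
    map_div₀, map_ofNat]
  ring

lemma cstar2_cstar2 (u : UnitCircle → ℂ) : cstar2 (cstar2 u) = u := by
  ext x
  have h1 : -(-x + P) = x + P := by rw [neg_add, neg_neg, neg_halfTurn]
  simp only [cstar2, evenPart, oddPart, neg_neg, h1, add_halfTurn_add_halfTurn, zz_add_halfTurn,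
    zz_neg, map_add, map_sub, map_mul, map_div₀, map_ofNat, map_neg, Complex.conj_conj]
  linear_combination u x * zz_mul_conj x

lemma cstar2_zz_sq_mul (u : UnitCircle → ℂ) :
    cstar2 (fun x => zz x ^ 2 * u x) = fun x => zz x ^ 2 * cstar2 u x := by
  ext x
  simp only [cstar2, evenPart, oddPart, zz_add_halfTurn, zz_neg, map_add, map_sub, map_mul,
    map_div₀, map_ofNat, map_neg, map_pow, Complex.conj_conj]
  ring

lemma cstar2_one : cstar2 1 = zz := by
  ext x
  simp only [cstar2, evenPart, oddPart, Pi.one_apply, map_add, map_sub, map_div₀, map_ofNat,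
    map_one]
  ring

lemma cstar2_zz : cstar2 zz = 1 := by
  ext x
  simp only [cstar2, evenPart, oddPart, zz_add_halfTurn, zz_neg, Pi.one_apply, map_add,
    map_sub, map_div₀, map_ofNat, map_neg, Complex.conj_conj]
  linear_combination zz_mul_conj x

lemma conj_cstar2_mul_cstar2_add_halfTurn (u v : UnitCircle → ℂ) (x : UnitCircle) :
    (starRingEnd ℂ) (cstar2 u x) * cstar2 v x
        + (starRingEnd ℂ) (cstar2 u (x + P)) * cstar2 v (x + P)
      = (starRingEnd ℂ) (v (-x)) * u (-x) + (starRingEnd ℂ) (v (-x + P)) * u (-x + P) := by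
  have h1 : -(x + P) = -x + P := by rw [neg_add, neg_halfTurn]
  simp only [cstar2, h1, evenPart_add_halfTurn, oddPart_add_halfTurn, zz_add_halfTurn,
    ← evenPart_add_oddPart u (-x), ← evenPart_add_oddPart v (-x), ← evenPart_sub_oddPart u,
    ← evenPart_sub_oddPart v, map_add, map_sub, map_mul, map_neg, Complex.conj_conj]
  linear_combination (2 * evenPart u (-x) * (starRingEnd ℂ) (evenPart v (-x))
    + 2 * oddPart u (-x) * (starRingEnd ℂ) (oddPart v (-x))) * zz_mul_conj x

lemma cstar2_congr {u v : UnitCircle → ℂ} (h : u =ᵐ[hm] v) : cstar2 u =ᵐ[hm] cstar2 v := by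
  have h_neg := (Measure.measurePreserving_neg hm).quasiMeasurePreserving.ae_eq_comp h
  have h_neg_shift := ((measurePreserving_add_right hm P).comp
    (Measure.measurePreserving_neg hm)).quasiMeasurePreserving.ae_eq_comp h
  filter_upwards [h_neg, h_neg_shift] with x e1 e2
  simp only [Function.comp_apply] at e1 e2
  simp only [cstar2, evenPart, oddPart, e1, e2]

theorem isConjugation_of_ae_eq_cstar2 {C : L2T → L2T}
    (hC : ∀ f : L2T, (C f : UnitCircle → ℂ) =ᵐ[hm] cstar2 f) : IsConjugation C where
  map_add f g := by
    refine Lp.ext ?_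
    filter_upwards [hC (f + g), cstar2_congr (Lp.coeFn_add f g), hC f, hC g,
      Lp.coeFn_add (C f) (C g)] with x e1 e2 e3 e4 e5
    rw [e1, e2, cstar2_add, e5, Pi.add_apply, Pi.add_apply, e3, e4]
  map_smul c f := by
    refine Lp.ext ?_
    filter_upwards [hC (c • f), cstar2_congr (Lp.coeFn_smul c f), hC f,
      Lp.coeFn_smul ((starRingEnd ℂ) c) (C f)] with x e1 e2 e3 e4
    rw [e1, e2, cstar2_smul, e4, Pi.smul_apply, Pi.smul_apply, e3]
  involutive f := by
    refine Lp.ext ?_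
    filter_upwards [hC (C f), cstar2_congr (hC f)] with x e1 e2
    rw [e1, e2, cstar2_cstar2]
  inner_eq f g := by
    have hCfg : (fun x => inner ℂ (C f x) (C g x))
        =ᵐ[hm] fun x => (starRingEnd ℂ) (cstar2 f x) * cstar2 g x := by
      filter_upwards [hC f, hC g] with x ef eg
      rw [RCLike.inner_apply', ef, eg]
    rw [L2.inner_def, L2.inner_def, integral_congr_ae hCfg]
    simp only [RCLike.inner_apply']
    refine integral_eq_of_add_comp_add_right_eq P ((L2.integrable_inner (C f) (C g)).congr hCfg)
      ?_ (conj_cstar2_mul_cstar2_add_halfTurn f g)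
    simpa only [RCLike.inner_apply'] using L2.integrable_inner (𝕜 := ℂ) g f

theorem commute_mul_zz_sq {C Mz2 : L2T → L2T}
    (hC : ∀ f : L2T, (C f : UnitCircle → ℂ) =ᵐ[hm] cstar2 f)
    (hMz2 : ∀ f : L2T, (Mz2 f : UnitCircle → ℂ) =ᵐ[hm] fun x => zz x ^ 2 * f x) (f : L2T) :
    C (Mz2 f) = Mz2 (C f) := by
  refine Lp.ext ?_
  filter_upwards [hC (Mz2 f), cstar2_congr (hMz2 f), hC f, hMz2 (C f)] with x e1 e2 e3 e4
  rw [e1, e2, cstar2_zz_sq_mul, e4, e3]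

theorem not_commute_mul_zz {C Mz : L2T → L2T}
    (hC : ∀ f : L2T, (C f : UnitCircle → ℂ) =ᵐ[hm] cstar2 f)
    (hMz : ∀ f : L2T, (Mz f : UnitCircle → ℂ) =ᵐ[hm] fun x => zz x * f x) :
    ¬ ∀ f, C (Mz f) = Mz (C f) := by
  intro hcomm
  have h_one : (fourierLp 2 0 : UnitCircle → ℂ) =ᵐ[hm] 1 :=
    (coeFn_fourierLp 2 0).trans (.of_forall fun x => fourier_zero)
  have h_sq : (fourierLp 2 2 : UnitCircle → ℂ) =ᵐ[hm] fun x => zz x ^ 2 :=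
    (coeFn_fourierLp 2 2).trans (.of_forall fun x : UnitCircle => by
      rw [show (2 : ℤ) = 1 + 1 from rfl, fourier_add]; exact (sq _).symm)
  have h_mul_one : (Mz (fourierLp 2 0) : UnitCircle → ℂ) =ᵐ[hm] zz := by
    filter_upwards [hMz (fourierLp 2 0), h_one] with x e1 e2
    rw [e1, e2, Pi.one_apply, mul_one]
  have h_left : C (Mz (fourierLp 2 0)) = fourierLp 2 0 := by
    refine Lp.ext ?_
    filter_upwards [hC (Mz (fourierLp 2 0)), cstar2_congr h_mul_one, h_one] with x e1 e2 e3
    rw [e1, e2, cstar2_zz, e3]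
  have h_right : Mz (C (fourierLp 2 0)) = fourierLp 2 2 := by
    refine Lp.ext ?_
    filter_upwards [hMz (C (fourierLp 2 0)), hC (fourierLp 2 0), cstar2_congr h_one, h_sq]
      with x e1 e2 e3 e4
    rw [e1, e2, e3, cstar2_one, e4, sq]
  have := orthonormal_fourier.linearIndependent.injective
    ((h_left.symm.trans (hcomm _)).trans h_right)
  omega

/-- `C*_{z²}` is a conjugation on `L²(𝕋)` that commutes with `M_{z²}` but not
with `M_z`. -/
theorem stmt_12 (Mz Mz2 : L2T →L[ℂ] L2T)
    (hMz : ∀ f : L2T, (Mz f : UnitCircle → ℂ) =ᵐ[hm]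
      fun x => zz x * (f : UnitCircle → ℂ) x)
    (hMz2 : ∀ f : L2T, (Mz2 f : UnitCircle → ℂ) =ᵐ[hm]
      fun x => zz x ^ 2 * (f : UnitCircle → ℂ) x)
    (C : L2T → L2T)
    (hC : ∀ f : L2T, (C f : UnitCircle → ℂ) =ᵐ[hm] cstar2 (f : UnitCircle → ℂ)) :
    IsConjugation C ∧ (∀ f, C (Mz2 f) = Mz2 (C f)) ∧ ¬ (∀ f, C (Mz f) = Mz (C f)) :=
  ⟨isConjugation_of_ae_eq_cstar2 hC, commute_mul_zz_sq hC hMz2, not_commute_mul_zz hC hMz⟩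
end
end

section
/- There is no conjugation C on L²(𝕋) that satisfies C M_{z²} = M_{\bar{z}²} C and maps the Hardy space H² into itself. -/
open MeasureTheory Complex
open scoped Real

noncomputable section

/-!
Put `g = C 1`. Intertwining gives `C (z^{2j}) = z̄^{2j} g`, and this lies in `H²` for every `j`
because `z^{2j}` does. Hence every Fourier coefficient of `g` vanishes, so `g = 0`, contradicting
`‖g‖ = ‖1‖ = 1` (a conjugation is isometric).
-/

section FourierMultiplier

variable {T : ℝ} [Fact (0 < T)]

def IsFourierMultiplier (n : ℤ)
    (M : Lp ℂ 2 (AddCircle.haarAddCircle (T := T)) → Lp ℂ 2 (AddCircle.haarAddCircle (T := T))) :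
    Prop :=
  ∀ f, (M f : AddCircle T → ℂ) =ᵐ[AddCircle.haarAddCircle] fun x => fourier n x * f x

theorem fourierCoeff_fourier_mul (n : ℤ) (f : AddCircle T → ℂ) (m : ℤ) :
    fourierCoeff (fun x => fourier n x * f x) m = fourierCoeff f (m - n) := by
  unfold fourierCoeff
  congr 1 with x
  rw [smul_eq_mul, smul_eq_mul, ← mul_assoc, ← fourier_add, neg_sub, neg_add_eq_sub]

namespace IsFourierMultiplier

variable {n : ℤ}
  {M : Lp ℂ 2 (AddCircle.haarAddCircle (T := T)) → Lp ℂ 2 (AddCircle.haarAddCircle (T := T))}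

theorem apply_fourierLp (hM : IsFourierMultiplier n M) (k : ℤ) :
    M (fourierLp 2 k) = fourierLp 2 (n + k) := by
  apply Lp.ext
  filter_upwards [hM (fourierLp 2 k), coeFn_fourierLp 2 k, coeFn_fourierLp 2 (n + k)]
    with x hMx hk hnk
  rw [hMx, hk, hnk, fourier_add]

theorem iterate_apply_fourierLp (hM : IsFourierMultiplier n M) (j : ℕ) (k : ℤ) :
    M^[j] (fourierLp 2 k) = fourierLp 2 (j * n + k) := by
  induction j with
  | zero => simp
  | succ j ih =>
    rw [Function.iterate_succ_apply', ih, hM.apply_fourierLp]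
    push_cast
    ring_nf

theorem fourierBasis_repr (hM : IsFourierMultiplier n M) (f) (m : ℤ) :
    fourierBasis.repr (M f) m = fourierBasis.repr f (m - n) := by
  rw [_root_.fourierBasis_repr, _root_.fourierBasis_repr, fourierCoeff_congr_ae (hM f),
    fourierCoeff_fourier_mul]

theorem fourierBasis_repr_iterate (hM : IsFourierMultiplier n M) (j : ℕ) (f) (m : ℤ) :
    fourierBasis.repr (M^[j] f) m = fourierBasis.repr f (m - j * n) := by
  induction j generalizing m with
  | zero => simp
  | succ j ih =>
    rw [Function.iterate_succ_apply', hM.fourierBasis_repr, ih]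
    push_cast
    ring_nf

end IsFourierMultiplier

end FourierMultiplier

theorem zz_pow (n : ℕ) (x : UnitCircle) : zz x ^ n = fourier n x := by
  induction n with
  | zero => simp
  | succ n ih => rw [pow_succ, ih, zz, Nat.cast_succ, fourier_add]

theorem conj_zz_pow (n : ℕ) (x : UnitCircle) : (starRingEnd ℂ) (zz x) ^ n = fourier (-n) x := by
  rw [fourier_neg, ← zz_pow, map_pow]

theorem fourierLp_mem_Hardy {n : ℤ} (hn : 0 ≤ n) : (fourierLp 2 n : L2T) ∈ Hardy := by
  lift n to ℕ using hn
  exact Submodule.le_topologicalClosure _ (Submodule.subset_span ⟨n, rfl⟩)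

theorem fourierBasis_repr_eq_zero_of_mem_Hardy {f : L2T} (hf : f ∈ Hardy) {m : ℤ} (hm : m < 0) :
    fourierBasis.repr f m = 0 := by
  have hker : Hardy ≤ LinearMap.ker (innerSL ℂ (fourierLp 2 m : L2T) : L2T →ₗ[ℂ] ℂ) := by
    refine Submodule.topologicalClosure_minimal _ ?_ (innerSL ℂ _).isClosed_ker
    rw [Submodule.span_le]
    rintro _ ⟨n, rfl⟩
    exact orthonormal_fourier.2 (by omega)
  rw [HilbertBasis.repr_apply_apply, coe_fourierBasis]
  simpa using hker hf

/-- Iterating a backward shift moves every Fourier coefficient of `f` to a negative frequency,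
where elements of `H²` have none. -/
theorem IsFourierMultiplier.eq_zero_of_forall_iterate_mem_Hardy {n : ℤ} {M : L2T → L2T}
    (hM : IsFourierMultiplier n M) (hn : n < 0) {f : L2T} (hf : ∀ j, M^[j] f ∈ Hardy) :
    f = 0 := by
  refine fourierBasis.repr.map_eq_zero_iff.mp (lp.ext (funext fun i => ?_))
  have hrepr := hM.fourierBasis_repr_iterate (i.toNat + 1) f (i + (i.toNat + 1 : ℕ) * n)
  rw [add_sub_cancel_right] at hrepr
  rw [← hrepr]
  refine fourierBasis_repr_eq_zero_of_mem_Hardy (hf _) ?_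
  have := Int.self_le_toNat i
  push_cast
  nlinarith

theorem IsConjugation.norm_map {C : L2T → L2T} (hC : IsConjugation C) (f : L2T) :
    ‖C f‖ = ‖f‖ := by
  have h := congrArg RCLike.re (hC.inner_eq f f)
  rw [inner_self_eq_norm_sq, inner_self_eq_norm_sq] at h
  exact (pow_left_inj₀ (norm_nonneg _) (norm_nonneg _) two_ne_zero).mp h

/-- There is no conjugation on `L²(𝕋)` intertwining `M_{z²}` and `M_{z̄²}`
that keeps the Hardy space `H²` invariant. -/
theorem stmt_15 (Mz2 Mzb2 : L2T →L[ℂ] L2T)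
    (hMz2 : ∀ f : L2T, (Mz2 f : UnitCircle → ℂ) =ᵐ[hm]
      fun x => zz x ^ 2 * (f : UnitCircle → ℂ) x)
    (hMzb2 : ∀ f : L2T, (Mzb2 f : UnitCircle → ℂ) =ᵐ[hm]
      fun x => (starRingEnd ℂ) (zz x) ^ 2 * (f : UnitCircle → ℂ) x) :
    ¬ ∃ C : L2T → L2T, IsConjugation C ∧ (∀ f, C (Mz2 f) = Mzb2 (C f)) ∧
      ∀ f : L2T, f ∈ Hardy → C f ∈ Hardy := by
  rintro ⟨C, hC, hcomm, hH⟩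
  have hz2 : IsFourierMultiplier 2 Mz2 := fun f => by
    simpa only [zz_pow, Nat.cast_ofNat] using hMz2 f
  have hzb2 : IsFourierMultiplier (-2) Mzb2 := fun f => by
    simpa only [conj_zz_pow, Nat.cast_ofNat] using hMzb2 f
  have hC_one : C (fourierLp 2 0) = 0 := by
    refine hzb2.eq_zero_of_forall_iterate_mem_Hardy (by norm_num) fun j => ?_
    rw [← Function.Semiconj.iterate_right hcomm j, hz2.iterate_apply_fourierLp]
    exact hH _ (fourierLp_mem_Hardy (by positivity))
  have h := hC.norm_map (fourierLp 2 0)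
  rw [hC_one, norm_zero, orthonormal_fourier.1 0] at h
  exact zero_ne_one h
end
end

section
/- If C is a conjugation on L²(𝕋) satisfying C M_{z²} = M_{\bar{z}²} C, then M_z C M_{\bar{z}} is also a conjugation on L²(𝕋) intertwining M_{z²} and M_{\bar{z}²}, and M_z C M_{\bar{z}} = M_{[z²ψ_2, z²ψ_1]} J whenever C = M_{[ψ_1,ψ_2]} J. -/
open MeasureTheory Complex
open scoped Real

noncomputable section

/-! The multiplication operator `M_z` is unitary with inverse `M_{z̄}`, and multiplication
operators commute, so conjugating `C` by `M_z` preserves both the conjugation axioms and the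
intertwining relation. For the symbol, `J M_{z̄} = M_z J`, and since `z` is odd
(`z(x + π) = -z(x)`), multiplying by `z` exchanges even and odd parts. -/

section MultiplicationOperator

variable {α : Type*} [MeasurableSpace α] {μ : Measure α} {φ ψ : α → ℂ}
  {M N : Lp ℂ 2 μ →L[ℂ] Lp ℂ 2 μ}

lemma ae_eq_mul_mul_of_ae_eq_mul (hM : ∀ f : Lp ℂ 2 μ, (M f : α → ℂ) =ᵐ[μ] fun x => φ x * f x)
    (hN : ∀ f : Lp ℂ 2 μ, (N f : α → ℂ) =ᵐ[μ] fun x => ψ x * f x) (f : Lp ℂ 2 μ) :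
    (M (N f) : α → ℂ) =ᵐ[μ] fun x => φ x * ψ x * f x := by
  filter_upwards [hM (N f), hN f] with x hMx hNx
  rw [hMx, hNx, mul_assoc]

lemma apply_apply_eq_self_of_mul_eq_one
    (hM : ∀ f : Lp ℂ 2 μ, (M f : α → ℂ) =ᵐ[μ] fun x => φ x * f x)
    (hN : ∀ f : Lp ℂ 2 μ, (N f : α → ℂ) =ᵐ[μ] fun x => ψ x * f x) (h : ∀ x, φ x * ψ x = 1)
    (f : Lp ℂ 2 μ) : M (N f) = f := by
  refine Lp.ext ?_
  filter_upwards [ae_eq_mul_mul_of_ae_eq_mul hM hN f] with x hx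
  rw [hx, h, one_mul]

lemma apply_apply_comm_of_ae_eq_mul
    (hM : ∀ f : Lp ℂ 2 μ, (M f : α → ℂ) =ᵐ[μ] fun x => φ x * f x)
    (hN : ∀ f : Lp ℂ 2 μ, (N f : α → ℂ) =ᵐ[μ] fun x => ψ x * f x) (f : Lp ℂ 2 μ) :
    M (N f) = N (M f) := by
  refine Lp.ext ?_
  filter_upwards [ae_eq_mul_mul_of_ae_eq_mul hM hN f, ae_eq_mul_mul_of_ae_eq_mul hN hM f]
    with x hMN hNM
  rw [hMN, hNM, mul_comm (φ x)]

lemma inner_apply_apply_of_conj_mul_eq_one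
    (hM : ∀ f : Lp ℂ 2 μ, (M f : α → ℂ) =ᵐ[μ] fun x => φ x * f x)
    (h : ∀ x, starRingEnd ℂ (φ x) * φ x = 1) (u v : Lp ℂ 2 μ) :
    (inner ℂ (M u) (M v) : ℂ) = inner ℂ u v := by
  rw [L2.inner_def, L2.inner_def]
  refine integral_congr_ae ?_
  filter_upwards [hM u, hM v] with x hu hv
  simp only [RCLike.inner_apply, hu, hv, map_mul]
  linear_combination starRingEnd ℂ (u x) * v x * h x

end MultiplicationOperator

lemma IsConjugation.conj_of_inverse {C : L2T → L2T} (hC : IsConjugation C)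
    {U V : L2T →L[ℂ] L2T} (hUV : ∀ f, U (V f) = f) (hVU : ∀ f, V (U f) = f)
    (hU : ∀ f g, (inner ℂ (U f) (U g) : ℂ) = inner ℂ f g) :
    IsConjugation fun f => U (C (V f)) where
  map_add f g := by simp only [_root_.map_add, hC.map_add]
  map_smul c f := by simp only [_root_.map_smul, hC.map_smul]
  involutive f := by simp only [hVU, hC.involutive, hUV]
  inner_eq f g := by
    have hV : ∀ f g, (inner ℂ (V f) (V g) : ℂ) = inner ℂ f g := fun f g => by
      rw [← hU, hUV, hUV]
    simp only [hU, hC.inner_eq, hV]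

lemma starRingEnd_zz_mul_zz (x : UnitCircle) : starRingEnd ℂ (zz x) * zz x = 1 := by
  rw [zz, ← fourier_neg, ← fourier_add, neg_add_cancel, fourier_zero]

lemma zz_add_pi (x : UnitCircle) : zz (x + ((π : ℝ) : UnitCircle)) = -zz x := by
  have h := fourier_add_half_inv_index one_ne_zero Real.two_pi_pos x
  rwa [Int.cast_one, div_one, mul_div_cancel_left₀ π two_ne_zero] at h

lemma mul2_congr_ae (φ1 φ2 : UnitCircle → ℂ) {g₁ g₂ : UnitCircle → ℂ} (h : g₁ =ᵐ[hm] g₂) :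
    mul2 φ1 φ2 g₁ =ᵐ[hm] mul2 φ1 φ2 g₂ := by
  have hshift :=
    (measurePreserving_add_right hm ((π : ℝ) : UnitCircle)).quasiMeasurePreserving.ae_eq h
  filter_upwards [h, hshift] with x hx hx'
  simp only [mul2, evenPart, oddPart, hx, Function.comp_apply] at hx' ⊢
  rw [hx']

lemma mul_mul2_zz_mul (φ1 φ2 g : UnitCircle → ℂ) (x : UnitCircle) :
    zz x * mul2 φ1 φ2 (fun y => zz y * g y) x =
      mul2 (fun y => zz y ^ 2 * φ2 y) (fun y => zz y ^ 2 * φ1 y) g x := by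
  simp only [mul2, evenPart, oddPart, zz_add_pi]
  ring

/-- If `C` is a conjugation intertwining `M_{z²}` and `M_{z̄²}`, so is
`M_z C M_{z̄}`, and if `C = M_{[ψ₁,ψ₂]} J` then `M_z C M_{z̄} = M_{[z²ψ₂, z²ψ₁]} J`. -/
theorem stmt_17 (Mz Mzb Mz2 Mzb2 : L2T →L[ℂ] L2T)
    (hMz : ∀ f : L2T, (Mz f : UnitCircle → ℂ) =ᵐ[hm]
      fun x => zz x * (f : UnitCircle → ℂ) x)
    (hMzb : ∀ f : L2T, (Mzb f : UnitCircle → ℂ) =ᵐ[hm]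
      fun x => (starRingEnd ℂ) (zz x) * (f : UnitCircle → ℂ) x)
    (hMz2 : ∀ f : L2T, (Mz2 f : UnitCircle → ℂ) =ᵐ[hm]
      fun x => zz x ^ 2 * (f : UnitCircle → ℂ) x)
    (hMzb2 : ∀ f : L2T, (Mzb2 f : UnitCircle → ℂ) =ᵐ[hm]
      fun x => (starRingEnd ℂ) (zz x) ^ 2 * (f : UnitCircle → ℂ) x)
    (C : L2T → L2T) (hC : IsConjugation C)
    (hint : ∀ f, C (Mz2 f) = Mzb2 (C f)) :
    IsConjugation (fun f => Mz (C (Mzb f))) ∧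
    (∀ f, Mz (C (Mzb (Mz2 f))) = Mzb2 (Mz (C (Mzb f)))) ∧
    ∀ ψ1 ψ2 : UnitCircle → ℂ,
      (∀ f : L2T, (C f : UnitCircle → ℂ) =ᵐ[hm]
        mul2 ψ1 ψ2 (fun y => (starRingEnd ℂ) ((f : UnitCircle → ℂ) y))) →
      ∀ f : L2T, ((Mz (C (Mzb f)) : L2T) : UnitCircle → ℂ) =ᵐ[hm]
        mul2 (fun x => zz x ^ 2 * ψ2 x) (fun x => zz x ^ 2 * ψ1 x)
          (fun y => (starRingEnd ℂ) ((f : UnitCircle → ℂ) y)) := by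
  refine ⟨?_, fun f => ?_, fun ψ1 ψ2 hψ f => ?_⟩
  · exact hC.conj_of_inverse
      (apply_apply_eq_self_of_mul_eq_one hMz hMzb fun x => by
        rw [mul_comm, starRingEnd_zz_mul_zz])
      (apply_apply_eq_self_of_mul_eq_one hMzb hMz starRingEnd_zz_mul_zz)
      (inner_apply_apply_of_conj_mul_eq_one hMz starRingEnd_zz_mul_zz)
  · rw [apply_apply_comm_of_ae_eq_mul hMzb hMz2, hint, apply_apply_comm_of_ae_eq_mul hMz hMzb2]
  · have hconj : (fun y => starRingEnd ℂ ((Mzb f : UnitCircle → ℂ) y)) =ᵐ[hm]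
        fun y => zz y * starRingEnd ℂ ((f : UnitCircle → ℂ) y) := by
      filter_upwards [hMzb f] with x hx
      rw [hx, map_mul, Complex.conj_conj]
    filter_upwards [hMz (C (Mzb f)), hψ (Mzb f), mul2_congr_ae ψ1 ψ2 hconj] with x hMzx hψx hx
    rw [hMzx, hψx, hx, mul_mul2_zz_mul]
end
end
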